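/- arXiv:2303.07148 — 4 statements merged into one kernel-verified Lean document; each statement's English description precedes it below -/
import Mathlib

section
/- Let (E, ≤_Ω) be a finite partial order of events, with nonempty input sets I_ω and nonempty output sets O_ω for each ω ∈ E, and let Θ := Hist(Ω, I) be the order-induced space of input histories, whose elements are exactly the partial functions h over (E, I) with dom(h) = ↓ω := {ξ ∈ E : ξ ≤_Ω ω} for some ω ∈ E. Then a joint input-output function F : ∏_{ω∈E} I_ω → ∏_{ω∈E} O_ω is causal for Θ if and only if there exists a family of functions G_ω : ∏_{ξ ∈ ↓ω} I_ξ → O_ω (ω ∈ E) such that F(k)(ω) = G_ω(k|_{↓ω}) for every total k ∈ ∏_{ω∈E} I_ω and every ω ∈ E. -/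
namespace Caus

/-- Partial functions over events `E` with value family `V`:
each event is assigned an optional value. -/
abbrev PF (E : Type) (V : E → Type) : Type := ∀ ω : E, Option (V ω)

variable {E : Type} {I O : E → Type}

/-- The total function `k` viewed as a partial function with full domain. -/
def toPF (k : ∀ ω : E, I ω) : PF E I := fun ω => some (k ω)

/-- Domain of a partial function. -/
def dom (h : PF E I) : Set E := {ω | (h ω).isSome}

/-- The order on partial functions: `h' ≤ h` iff `dom h' ⊆ dom h` and they agree on `dom h'`. -/
def le (h' h : PF E I) : Prop := ∀ ω : E, (h' ω).isSome → h' ω = h ω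

/-- Compatibility: agreeing on the intersection of the domains. -/
def Compat (h h' : PF E I) : Prop :=
  ∀ ω : E, (h ω).isSome → (h' ω).isSome → h ω = h' ω

/-- Join of two partial functions (union, when they are compatible). -/
def join (h h' : PF E I) : PF E I := fun ω => (h ω).orElse fun _ => h' ω

/-- `k` is the join (union) of the set `S` of partial functions. -/
def IsJoinOf (k : PF E I) (S : Set (PF E I)) : Prop :=
  ∀ (ω : E) (x : I ω), k ω = some x ↔ ∃ h ∈ S, h ω = some x

/-- `Ext Θ`: joins of nonempty pairwise-compatible subsets of `Θ`. -/
def Ext (Θ : Set (PF E I)) : Set (PF E I) :=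
  {k | ∃ S ⊆ Θ, S.Nonempty ∧ S.Pairwise Compat ∧ IsJoinOf k S}

/-- A space of input histories: every `h ∈ Θ` is ∨-prime in `Ext Θ`. -/
def IsSpace (Θ : Set (PF E I)) : Prop :=
  ∀ h ∈ Θ, ∀ k ∈ Ext Θ, ∀ k' ∈ Ext Θ, Compat k k' →
    le h (join k k') → le h k ∨ le h k'

/-- Tip events of `h` in `Θ`. -/
def tips (Θ : Set (PF E I)) (h : PF E I) : Set E :=
  {ω | ω ∈ dom h ∧ ∀ h' ∈ Θ, le h' h → h' ≠ h → ω ∉ dom h'}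

/-- Extended functions: the output partial function has the same domain as the input. -/
def IsExtFun (Θ : Set (PF E I)) (F : PF E I → PF E O) : Prop :=
  ∀ k ∈ Ext Θ, dom (F k) = dom k

/-- The consistency condition for extended functions. -/
def Consistent (Θ : Set (PF E I)) (F : PF E I → PF E O) : Prop :=
  ∀ k ∈ Ext Θ, ∀ k' ∈ Ext Θ, le k' k → le (F k') (F k)

/-- `h` and `h'` are constrained at `ω`: both have tip `ω` and every consistent
extended function with binary outputs takes the same value at `ω` on them. -/
def Constr (Θ : Set (PF E I)) (ω : E) (h h' : PF E I) : Prop :=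
  h ∈ Θ ∧ h' ∈ Θ ∧ ω ∈ tips Θ h ∧ ω ∈ tips Θ h' ∧
  ∀ F : PF E I → PF E (fun _ => Bool),
    IsExtFun Θ F → Consistent Θ F → F h ω = F h' ω

/-- Causal function conditions: `f h` is an assignment of outputs to the tips of `h`,
with equal outputs on histories constrained at an event. -/
def IsCausFun (Θ : Set (PF E I)) (f : PF E I → PF E O) : Prop :=
  (∀ h ∈ Θ, dom (f h) = tips Θ h) ∧
  ∀ (ω : E) (h h' : PF E I), Constr Θ ω h h' → f h ω = f h' ω

/-- Causal functions for `Θ` with outputs `W` (normalized to `none` outside `Θ`). -/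
def CausFunSet (Θ : Set (PF E I)) (W : E → Type) : Set (PF E I → PF E W) :=
  {f | IsCausFun Θ f ∧ ∀ h ∉ Θ, ∀ ω : E, f h ω = none}

open Classical in
/-- The extended causal function `Ext f` of a causal function `f`. -/
noncomputable def extCF (Θ : Set (PF E I)) (f : PF E I → PF E O) : PF E I → PF E O :=
  fun k ω =>
    if hh : ∃ h, h ∈ Θ ∧ le h k ∧ ω ∈ tips Θ h then f hh.choose ω else none

open Classical in
/-- `Prime F̂`: the causal function underlying a consistent extended function. -/
noncomputable def primeCF (Θ : Set (PF E I)) (F : PF E I → PF E O) : PF E I → PF E O :=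
  fun h ω => if h ∈ Θ ∧ ω ∈ tips Θ h then F h ω else none

open Classical in
/-- Restriction of a causal function to a lowerset (normalized outside it). -/
noncomputable def restrictCF (lam : Set (PF E I)) (f : PF E I → PF E O) :
    PF E I → PF E O :=
  fun h => if h ∈ lam then f h else fun _ => none

/-- The free-choice condition. -/
def FreeChoice (Θ : Set (PF E I)) : Prop := ∀ k : ∀ ω : E, I ω, toPF k ∈ Ext Θ

/-- Tightness. -/
def Tight (Θ : Set (PF E I)) : Prop :=
  ∀ k ∈ Ext Θ, ∀ ω ∈ dom k, ∃! h, h ∈ Θ ∧ le h k ∧ ω ∈ tips Θ h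

/-- Maximal extended input histories. -/
def maxExt (Θ : Set (PF E I)) : Set (PF E I) :=
  {k | k ∈ Ext Θ ∧ ∀ k' ∈ Ext Θ, le k k' → k' = k}

/-- Lowersets (downward-closed subsets) of a space `Θ`. -/
def IsLowersetOf (Θ lam : Set (PF E I)) : Prop :=
  lam ⊆ Θ ∧ ∀ h ∈ lam, ∀ h' ∈ Θ, le h' h → h' ∈ lam


/-- A joint input-output function `F` is causal for `Θ`: the output at any tip event `ω`
of a history `h ∈ Θ` is the same on all total joint inputs extending `h`. -/
def JointCausal (Θ : Set (PF E I)) (F : (∀ ω : E, I ω) → (∀ ω : E, O ω)) : Prop :=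
  ∀ h ∈ Θ, ∀ ω ∈ tips Θ h, ∀ k k' : ∀ ω : E, I ω,
    le h (toPF k) → le h (toPF k') → F k ω = F k' ω

/-! On `Hist(Ω, I)` the only tip of a history with domain `↓ω` is `ω` itself, so the history
below a total input `k` with tip `ω` is the restriction `k|↓ω`. Causality therefore says
exactly that `F k ω` depends only on `k|↓ω`, i.e. factors through that restriction. -/

/-- The order-induced space of input histories `Hist(Ω, I)`. -/
def Hist (E : Type) [Preorder E] (I : E → Type) : Set (PF E I) :=
  {h | ∃ ω : E, dom h = Set.Iic ω}

open Classical in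
noncomputable def restrict (h : PF E I) (s : Set E) : PF E I :=
  fun ξ => if ξ ∈ s then h ξ else none

lemma dom_restrict (h : PF E I) (s : Set E) : dom (restrict h s) = dom h ∩ s := by
  ext ξ
  by_cases hξ : ξ ∈ s <;> simp [dom, restrict, hξ]

lemma restrict_le (h : PF E I) (s : Set E) : le (restrict h s) h := by
  intro ξ hξ
  by_cases hs : ξ ∈ s <;> simp_all [restrict]

lemma dom_toPF (k : ∀ ω, I ω) : dom (toPF k) = Set.univ := by
  simp [dom, toPF]

lemma eq_of_le_of_dom_subset {h' h : PF E I} (hle : le h' h) (hdom : dom h ⊆ dom h') :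
    h' = h := by
  funext ξ
  by_cases hξ : ξ ∈ dom h'
  · exact hle ξ hξ
  · have hξ' : ξ ∉ dom h := fun hmem => hξ (hdom hmem)
    simp_all [dom]

lemma le_toPF_iff {h : PF E I} {k : ∀ ω, I ω} : le h (toPF k) ↔ ∀ ξ ∈ dom h, h ξ = some (k ξ) :=
  Iff.rfl

lemma restrict_toPF_le_toPF_iff {k k' : ∀ ω, I ω} {s : Set E} :
    le (restrict (toPF k) s) (toPF k') ↔ ∀ ξ ∈ s, k ξ = k' ξ := by
  simp only [le_toPF_iff, dom_restrict, dom_toPF, Set.univ_inter]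
  refine forall₂_congr fun ξ hξ => ?_
  simp [restrict, toPF, hξ]

lemma eq_of_le_toPF {h : PF E I} {k k' : ∀ ω, I ω} (hk : le h (toPF k)) (hk' : le h (toPF k'))
    {ξ : E} (hξ : ξ ∈ dom h) : k ξ = k' ξ :=
  Option.some_injective _ ((hk ξ hξ).symm.trans (hk' ξ hξ))

section PartialOrder

variable [PartialOrder E]

lemma restrict_mem_hist {h : PF E I} {ω ξ : E} (hh : dom h = Set.Iic ω) (hξ : ξ ≤ ω) :
    restrict h (Set.Iic ξ) ∈ Hist E I :=
  ⟨ξ, by rw [dom_restrict, hh, Set.inter_eq_right.2 (Set.Iic_subset_Iic.2 hξ)]⟩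

lemma tips_hist {h : PF E I} {ω : E} (hh : dom h = Set.Iic ω) : tips (Hist E I) h = {ω} := by
  ext ξ
  constructor
  · rintro ⟨hξ, hmin⟩
    rw [hh] at hξ
    by_contra hne
    have hω : ω ∉ dom (restrict h (Set.Iic ξ)) := by
      simpa [dom_restrict, hh] using fun hωξ => hne (le_antisymm hξ hωξ)
    refine hmin _ (restrict_mem_hist hh hξ) (restrict_le h _) (fun heq => ?_) ?_
    · rw [heq, hh] at hω
      exact hω le_rfl
    · simpa [dom_restrict, hh] using hξ
  · rintro rfl
    refine ⟨hh ▸ le_refl ξ, fun h' ⟨ω', hh'⟩ hle hne hξ => hne ?_⟩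
    rw [hh'] at hξ
    refine eq_of_le_of_dom_subset hle ?_
    rw [hh, hh']
    exact Set.Iic_subset_Iic.2 hξ

lemma jointCausal_hist_iff {F : (∀ ω, I ω) → (∀ ω, O ω)} :
    JointCausal (Hist E I) F ↔ ∀ ω, DependsOn (fun k => F k ω) (Set.Iic ω) := by
  constructor
  · intro hF ω k k' hkk'
    have hdom : dom (restrict (toPF k) (Set.Iic ω)) = Set.Iic ω := by
      rw [dom_restrict, dom_toPF, Set.univ_inter]
    exact hF _ ⟨ω, hdom⟩ ω (by simp [tips_hist hdom]) k k'
      (restrict_toPF_le_toPF_iff.2 fun _ _ => rfl) (restrict_toPF_le_toPF_iff.2 hkk')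
  · rintro hF h ⟨ω₀, hh⟩ ω hω k k' hk hk'
    obtain rfl : ω = ω₀ := by simpa [tips_hist hh] using hω
    exact hF ω fun ξ hξ => eq_of_le_toPF hk hk' (hh ▸ hξ)

end PartialOrder

theorem stmt0_general {E : Type} [PartialOrder E]
    {I O : E → Type} [∀ ω, Nonempty (O ω)]
    (Θ : Set (PF E I)) (hΘ : Θ = {h : PF E I | ∃ ω : E, dom h = Set.Iic ω})
    (F : (∀ ω : E, I ω) → (∀ ω : E, O ω)) :
    JointCausal Θ F ↔
      ∃ G : ∀ ω : E, ((∀ ξ : {ξ : E // ξ ≤ ω}, I ξ.1) → O ω),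
        ∀ (k : ∀ ω : E, I ω) (ω : E), F k ω = G ω (fun ξ => k ξ.1) := by
  obtain rfl : Θ = Hist E I := hΘ
  simp only [jointCausal_hist_iff, dependsOn_iff_exists_comp, funext_iff, Function.comp_apply,
    Classical.skolem]
  exact exists_congr fun G => forall_comm

/-- on the space of input histories induced by a finite causal order,
joint IO functions causal for the space are exactly those of the form
`F(k)(ω) = G_ω(k|_{↓ω})` for a family of functions `G`. -/
theorem stmt0 {E : Type} [Fintype E] [PartialOrder E]
    {I O : E → Type} [∀ ω, Nonempty (I ω)] [∀ ω, Nonempty (O ω)]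
    (Θ : Set (PF E I)) (hΘ : Θ = {h : PF E I | ∃ ω : E, dom h = Set.Iic ω})
    (F : (∀ ω : E, I ω) → (∀ ω : E, O ω)) :
    JointCausal Θ F ↔
      ∃ G : ∀ ω : E, ((∀ ξ : {ξ : E // ξ ≤ ω}, I ξ.1) → O ω),
        ∀ (k : ∀ ω : E, I ω) (ω : E), F k ω = G ω (fun ξ => k ξ.1) :=
  stmt0_general Θ hΘ F

end Caus
end

section
/- Let Θ be a space of input histories over (E, I) with output sets O. An extended function F̂ ∈ ExtFun(Θ,O) satisfies the consistency condition (k' ≤ k implies F̂(k') ≤ F̂(k)) if and only if it satisfies the gluing condition: for all compatible k, k' ∈ Ext(Θ), the partial functions F̂(k) and F̂(k') are compatible and F̂(k ∨ k') = F̂(k) ∨ F̂(k'). -/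
namespace Caus

variable {E : Type} {I O : E → Type}

/-!
Consistency gives `F̂ k ≤ F̂ (k ∨ k')` and `F̂ k' ≤ F̂ (k ∨ k')`, so `F̂ k` and `F̂ k'` are compatible,
and since `F̂ (k ∨ k')` has domain `dom k ∪ dom k'` it is exactly their union. Conversely, if
`k' ≤ k` then `k' ∨ k = k`, and gluing yields `F̂ k = F̂ k' ∨ F̂ k ≥ F̂ k'`.
-/

section PartialFunctions

variable {V : E → Type} {a b h k k' : PF E V} {S S' : Set (PF E V)}

theorem le_iff_forall_eq_some : le h k ↔ ∀ ω (x : V ω), h ω = some x → k ω = some x := by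
  refine ⟨fun hle ω x hx => ?_, fun H ω hs => ?_⟩
  · rw [← hle ω (by simp [hx]), hx]
  · obtain ⟨x, hx⟩ := Option.isSome_iff_exists.mp hs
    rw [hx, H ω x hx]

theorem le.refl (k : PF E V) : le k k := fun _ _ => rfl

theorem Compat.eq_of_eq_some (hc : Compat k k') {ω : E} {x y : V ω}
    (hx : k ω = some x) (hy : k' ω = some y) : x = y := by
  simpa [hx, hy] using hc ω (by simp [hx]) (by simp [hy])

theorem Compat.mono (hc : Compat k k') (ha : le a k) (hb : le b k') : Compat a b := by
  intro ω sa sb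
  rw [ha ω sa, hb ω sb]
  exact hc ω (ha ω sa ▸ sa) (hb ω sb ▸ sb)

theorem compat_of_le_of_le (ha : le a k) (hb : le b k) : Compat a b :=
  Compat.mono (fun _ _ _ => rfl) ha hb

theorem Compat.symm (hc : Compat k k') : Compat k' k := fun ω s s' => (hc ω s' s).symm

theorem join_eq_some_iff (hc : Compat k k') {ω : E} {x : V ω} :
    join k k' ω = some x ↔ k ω = some x ∨ k' ω = some x := by
  unfold join
  cases hk : k ω with
  | none => simp
  | some y =>
    cases hk' : k' ω with
    | none => simp
    | some z =>
      obtain rfl := hc.eq_of_eq_some hk hk'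
      simp

theorem dom_join : dom (join k k') = dom k ∪ dom k' := by
  ext ω
  simp only [dom, join, Set.mem_ofPred_eq, Set.mem_union]
  cases k ω <;> simp

theorem le_join_left : le k (join k k') :=
  le_iff_forall_eq_some.2 fun ω x hx => by simp [join, hx]

theorem le_join_right (hc : Compat k k') : le k' (join k k') :=
  le_iff_forall_eq_some.2 fun _ _ hx => (join_eq_some_iff hc).2 (Or.inr hx)

theorem join_eq_right_of_le (hle : le k' k) : join k' k = k := by
  funext ω
  cases hx : k' ω with
  | none => simp [join, hx]
  | some x => rw [(join_eq_some_iff (compat_of_le_of_le hle (le.refl k))).2 (Or.inl hx),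
      le_iff_forall_eq_some.1 hle ω x hx]

theorem eq_join_of_le_of_le (ha : le a k) (hb : le b k) (hdom : dom k ⊆ dom a ∪ dom b) :
    k = join a b := by
  funext ω
  cases hx : a ω with
  | some x => simp [join, hx, le_iff_forall_eq_some.1 ha ω x hx]
  | none =>
    cases hy : b ω with
    | some y => simp [join, hx, hy, le_iff_forall_eq_some.1 hb ω y hy]
    | none =>
      have : ω ∉ dom k := fun hω => by simpa [dom, hx, hy] using hdom hω
      simpa [dom, join, hx, hy] using this

theorem IsJoinOf.le_of_mem (hk : IsJoinOf k S) (hh : h ∈ S) : le h k :=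
  le_iff_forall_eq_some.2 fun ω x hx => (hk ω x).2 ⟨h, hh, hx⟩

theorem IsJoinOf.union (hk : IsJoinOf k S) (hk' : IsJoinOf k' S') (hc : Compat k k') : IsJoinOf (join k k') (S ∪ S') := by
  intro ω x
  simp only [join_eq_some_iff hc, hk ω x, hk' ω x, Set.mem_union, or_and_right, exists_or]

theorem join_mem_Ext {Θ : Set (PF E V)} (hk : k ∈ Ext Θ) (hk' : k' ∈ Ext Θ)
    (hc : Compat k k') : join k k' ∈ Ext Θ := by
  obtain ⟨S, hSΘ, hSne, hSpw, hSj⟩ := hk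
  obtain ⟨S', hS'Θ, -, hS'pw, hS'j⟩ := hk'
  refine ⟨S ∪ S', Set.union_subset hSΘ hS'Θ, hSne.mono Set.subset_union_left, ?_,
    hSj.union hS'j hc⟩
  refine Set.pairwise_union.2 ⟨hSpw, hS'pw, fun a ha b hb _ => ?_⟩
  have hab := hc.mono (hSj.le_of_mem ha) (hS'j.le_of_mem hb)
  exact ⟨hab, hab.symm⟩

end PartialFunctions

theorem stmt1_general {E : Type} {I O : E → Type}
    (Θ : Set (PF E I))
    (F : PF E I → PF E O) (hF : IsExtFun Θ F) :
    Consistent Θ F ↔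
      ∀ k ∈ Ext Θ, ∀ k' ∈ Ext Θ, Compat k k' →
        Compat (F k) (F k') ∧ F (join k k') = join (F k) (F k') := by
  constructor
  · intro hC k hk k' hk' hc
    have hj := join_mem_Ext hk hk' hc
    have hl := hC _ hj k hk le_join_left
    have hr := hC _ hj k' hk' (le_join_right hc)
    refine ⟨compat_of_le_of_le hl hr, eq_join_of_le_of_le hl hr ?_⟩
    rw [hF _ hj, hF k hk, hF k' hk', dom_join]
  · intro hG k hk k' hk' hle
    have hglue := (hG k' hk' k hk (compat_of_le_of_le hle (le.refl k))).2
    rw [join_eq_right_of_le hle] at hglue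
    rw [hglue]
    exact le_join_left

/-- an extended function satisfies the consistency condition iff it
satisfies the gluing condition. -/
theorem stmt1 {E : Type} [Fintype E] {I O : E → Type}
    [∀ ω, Nonempty (I ω)] [∀ ω, Nonempty (O ω)]
    (Θ : Set (PF E I)) (hS : IsSpace Θ)
    (F : PF E I → PF E O) (hF : IsExtFun Θ F) :
    Consistent Θ F ↔
      ∀ k ∈ Ext Θ, ∀ k' ∈ Ext Θ, Compat k k' →
        Compat (F k) (F k') ∧ F (join k k') = join (F k) (F k') :=
  stmt1_general Θ F hF

end Caus
end

section
/- Let Θ be a space of input histories over (E, I) with output sets O. An extended function F̂ ∈ ExtFun(Θ,O) is of the form Ext(f) for some causal function f ∈ CausFun(Θ,O) if and only if F̂ satisfies the consistency condition. Moreover, in that case the causal function f is unique and equals Prime(F̂): one has Ext(Prime(F̂)) = F̂ for every F̂ satisfying the consistency condition, and Prime(Ext(f)) = f for every f ∈ CausFun(Θ,O). -/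
namespace Caus

variable {E : Type} {I O : E → Type}

/-!
`Ext` and `Prime` are mutually inverse. Two input histories below a common `k ∈ Ext Θ` are
compatible, so their join lies in `Ext Θ`; if they share the tip `ω`, every consistent
extended function takes the same value at `ω` on both, i.e. they are constrained at `ω`,
which makes `Ext f` independent of the history chosen. Since `E` is finite, every event of
`k ∈ Ext Θ` is a tip of some history below `k` (descend along strictly smaller domains), so a
consistent `F̂` is determined by its values at tips. Finally `Prime F̂` respects constraints:
test a constraint `h ∼_ω h'` against the binary extended function recording whether `F̂`
agrees with `F̂ h` at `ω`.
-/

section Order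

theorem le.refl_s2 (h : PF E I) : le h h := fun _ _ => rfl

theorem le.trans {a b c : PF E I} (hab : le a b) (hbc : le b c) : le a c := fun ω hs =>
  (hab ω hs).trans (hbc ω (hab ω hs ▸ hs))

theorem le.mem_dom {h' h : PF E I} (hle : le h' h) {ω : E} (hω : ω ∈ dom h') : ω ∈ dom h :=
  show (h ω).isSome from hle ω hω ▸ hω

theorem compat_of_le {h h' k : PF E I} (hk : le h k) (hk' : le h' k) : Compat h h' :=
  fun ω hs hs' => (hk ω hs).trans (hk' ω hs').symm

theorem le_join_left_s2 (h h' : PF E I) : le h (join h h') := by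
  intro ω hs
  obtain ⟨v, hv⟩ := Option.isSome_iff_exists.mp hs
  simp [join, hv]

theorem le_join_right_s2 {h h' : PF E I} (hc : Compat h h') : le h' (join h h') := by
  intro ω hs
  cases hv : h ω with
  | none => simp [join, hv]
  | some v => simp [join, hv, ← hc ω (by simp [hv]) hs]

theorem isJoinOf_pair {h h' : PF E I} (hc : Compat h h') : IsJoinOf (join h h') {h, h'} := by
  intro ω x
  simp only [Set.mem_insert_iff, Set.mem_singleton_iff, exists_eq_or_imp, exists_eq_left]
  cases hv : h ω with
  | none => simp [join, hv]
  | some v =>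
    have hv' := hc ω (by simp [hv])
    cases hw : h' ω <;> simp_all [join]

theorem dom_ssubset_of_le {h' h : PF E I} (hle : le h' h) (hne : h' ≠ h) : dom h' ⊂ dom h := by
  refine ⟨fun ω => hle.mem_dom, fun hdom => hne (funext fun ω => ?_)⟩
  by_cases hω : ω ∈ dom h'
  · exact hle ω hω
  · have hω' : ω ∉ dom h := fun h => hω (hdom h)
    simp only [dom, Set.mem_ofPred_eq, Option.not_isSome_iff_eq_none] at hω hω'
    rw [hω, hω']

theorem le_of_isJoinOf {k h : PF E I} {S : Set (PF E I)} (hk : IsJoinOf k S) (hh : h ∈ S) :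
    le h k := by
  intro ω hs
  obtain ⟨x, hx⟩ := Option.isSome_iff_exists.mp hs
  rw [hx, (hk ω x).mpr ⟨h, hh, hx⟩]

end Order

section Ext

variable {Θ : Set (PF E I)}

theorem mem_ext_of_mem {h : PF E I} (hh : h ∈ Θ) : h ∈ Ext Θ :=
  ⟨{h}, Set.singleton_subset_iff.mpr hh, Set.singleton_nonempty h, Set.pairwise_singleton _ _,
    fun ω x => by simp⟩

theorem join_mem_ext {h h' : PF E I} (hh : h ∈ Θ) (hh' : h' ∈ Θ) (hc : Compat h h') :
    join h h' ∈ Ext Θ :=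
  ⟨{h, h'}, Set.insert_subset hh (Set.singleton_subset_iff.mpr hh'), Set.insert_nonempty _ _,
    Set.pairwise_pair.mpr fun _ => ⟨hc, fun ω hs hs' => (hc ω hs' hs).symm⟩, isJoinOf_pair hc⟩

theorem exists_tip_le [Finite E] {h : PF E I} (hh : h ∈ Θ) {ω : E} (hω : ω ∈ dom h) :
    ∃ h' ∈ Θ, le h' h ∧ ω ∈ tips Θ h' := by
  induction h using (measure fun h : PF E I => (dom h).ncard).wf.induction with
  | _ h ih =>
  by_cases ht : ω ∈ tips Θ h
  · exact ⟨h, hh, le.refl_s2 h, ht⟩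
  obtain ⟨h', hh', hle, hne, hω'⟩ : ∃ h' ∈ Θ, le h' h ∧ h' ≠ h ∧ ω ∈ dom h' := by
    simpa [tips, hω] using ht
  obtain ⟨h'', hh'', hle', ht'⟩ :=
    ih h' (Set.ncard_lt_ncard (dom_ssubset_of_le hle hne)) hh' hω'
  exact ⟨h'', hh'', hle'.trans hle, ht'⟩

theorem exists_tip_le_of_mem_ext [Finite E] {k : PF E I} (hk : k ∈ Ext Θ) {ω : E}
    (hω : ω ∈ dom k) : ∃ h ∈ Θ, le h k ∧ ω ∈ tips Θ h := by
  obtain ⟨S, hSΘ, -, -, hkS⟩ := hk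
  obtain ⟨x, hx⟩ := Option.isSome_iff_exists.mp hω
  obtain ⟨h₀, h₀S, h₀x⟩ := (hkS ω x).mp hx
  obtain ⟨h, hh, hle, ht⟩ := exists_tip_le (hSΘ h₀S) (show (h₀ ω).isSome by simp [h₀x])
  exact ⟨h, hh, hle.trans (le_of_isJoinOf hkS h₀S), ht⟩

end Ext

section ExtFun

variable {Θ : Set (PF E I)} {F : PF E I → PF E O}

theorem IsExtFun.mem_dom (hF : IsExtFun Θ F) {k : PF E I} (hk : k ∈ Ext Θ) {ω : E}
    (hω : ω ∈ dom k) : ω ∈ dom (F k) :=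
  (hF k hk).symm ▸ hω

theorem Consistent.congr {G : PF E I → PF E O} (hC : Consistent Θ F)
    (hFG : ∀ k ∈ Ext Θ, F k = G k) : Consistent Θ G := fun k hk k' hk' hle =>
  hFG k hk ▸ hFG k' hk' ▸ hC k hk k' hk' hle

theorem constr_of_compat {ω : E} {h h' : PF E I} (hh : h ∈ Θ) (hh' : h' ∈ Θ)
    (ht : ω ∈ tips Θ h) (ht' : ω ∈ tips Θ h') (hc : Compat h h') : Constr Θ ω h h' := by
  refine ⟨hh, hh', ht, ht', fun G hG hGC => ?_⟩
  have hj := join_mem_ext hh hh' hc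
  rw [hGC _ hj h (mem_ext_of_mem hh) (le_join_left_s2 h h') ω
      (hG.mem_dom (mem_ext_of_mem hh) ht.1),
    hGC _ hj h' (mem_ext_of_mem hh') (le_join_right_s2 hc) ω
      (hG.mem_dom (mem_ext_of_mem hh') ht'.1)]

open Classical in
noncomputable def agreeAt (F : PF E I → PF E O) (h : PF E I) (ω : E) :
    PF E I → PF E (fun _ => Bool) :=
  fun k ω' => (k ω').map fun _ => decide (ω' = ω ∧ F k ω = F h ω)

theorem isExtFun_agreeAt (h : PF E I) (ω : E) : IsExtFun Θ (agreeAt F h ω) := by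
  intro k _
  ext ω'
  simp [agreeAt, dom]

theorem consistent_agreeAt (hF : IsExtFun Θ F) (hC : Consistent Θ F) (h : PF E I) (ω : E) :
    Consistent Θ (agreeAt F h ω) := by
  intro k hk k' hk' hle ω' hs
  have hω' : ω' ∈ dom k' := show (k' ω').isSome by simpa [agreeAt] using hs
  simp only [agreeAt, ← hle ω' hω']
  by_cases hωω' : ω' = ω
  · subst hωω'
    rw [hC k hk k' hk' hle ω' (hF.mem_dom hk' hω')]
  · simp [hωω']

theorem Consistent.apply_eq_of_constr (hF : IsExtFun Θ F) (hC : Consistent Θ F) {ω : E}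
    {h h' : PF E I} (hcon : Constr Θ ω h h') : F h ω = F h' ω := by
  obtain ⟨-, -, ht, ht', hall⟩ := hcon
  have hagree := hall _ (isExtFun_agreeAt h ω) (consistent_agreeAt hF hC h ω)
  obtain ⟨x, hx⟩ := Option.isSome_iff_exists.mp ht.1
  obtain ⟨x', hx'⟩ := Option.isSome_iff_exists.mp ht'.1
  simpa [agreeAt, hx, hx', eq_comm] using hagree

end ExtFun

section CausFun

variable {Θ : Set (PF E I)} {f F : PF E I → PF E O}

theorem apply_eq_none_of_not_tip (hf : f ∈ CausFunSet Θ O) {h : PF E I} {ω : E}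
    (hω : ¬(h ∈ Θ ∧ ω ∈ tips Θ h)) : f h ω = none := by
  by_cases hh : h ∈ Θ
  · have hω' : ω ∉ dom (f h) := hf.1.1 h hh ▸ fun ht => hω ⟨hh, ht⟩
    simpa [dom] using hω'
  · exact hf.2 h hh ω

theorem extCF_apply_of_tip (hf : IsCausFun Θ f) {k h : PF E I} {ω : E} (hh : h ∈ Θ)
    (hle : le h k) (ht : ω ∈ tips Θ h) : extCF Θ f k ω = f h ω := by
  have hex : ∃ h, h ∈ Θ ∧ le h k ∧ ω ∈ tips Θ h := ⟨h, hh, hle, ht⟩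
  obtain ⟨hh₀, hle₀, ht₀⟩ := hex.choose_spec
  rw [extCF, dif_pos hex]
  exact hf.2 ω _ _ (constr_of_compat hh₀ hh ht₀ ht (compat_of_le hle₀ hle))

theorem extCF_apply_of_not_mem_dom {k : PF E I} {ω : E} (hω : ω ∉ dom k) :
    extCF Θ f k ω = none :=
  dif_neg fun ⟨_, _, hle, ht⟩ => hω (hle.mem_dom ht.1)

theorem consistent_extCF (hf : IsCausFun Θ f) : Consistent Θ (extCF Θ f) := by
  intro k _ k' _ hle ω hs
  by_cases hex : ∃ h, h ∈ Θ ∧ le h k' ∧ ω ∈ tips Θ h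
  · obtain ⟨h, hh, hhk', ht⟩ := hex
    rw [extCF_apply_of_tip hf hh hhk' ht, extCF_apply_of_tip hf hh (hhk'.trans hle) ht]
  · simp [extCF, hex] at hs

theorem primeCF_apply_of_tip {h : PF E I} {ω : E} (hh : h ∈ Θ) (ht : ω ∈ tips Θ h) :
    primeCF Θ F h ω = F h ω :=
  if_pos ⟨hh, ht⟩

theorem primeCF_congr {G : PF E I → PF E O} (hFG : ∀ h ∈ Θ, F h = G h) :
    primeCF Θ F = primeCF Θ G := by
  funext h ω
  simp only [primeCF]
  split_ifs with hω
  · rw [hFG h hω.1]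
  · rfl

theorem primeCF_mem_causFunSet (hF : IsExtFun Θ F) (hC : Consistent Θ F) :
    primeCF Θ F ∈ CausFunSet Θ O := by
  refine ⟨⟨fun h hh => ?_, fun ω h h' hcon => ?_⟩, fun h hh ω => if_neg fun hω => hh hω.1⟩
  · ext ω
    by_cases ht : ω ∈ tips Θ h
    · refine iff_of_true ?_ ht
      exact show (primeCF Θ F h ω).isSome from
        (primeCF_apply_of_tip hh ht).symm ▸ hF.mem_dom (mem_ext_of_mem hh) ht.1
    · simp [dom, primeCF, ht]
  · have ⟨hh, hh', ht, ht', _⟩ := hcon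
    rw [primeCF_apply_of_tip hh ht, primeCF_apply_of_tip hh' ht']
    exact hC.apply_eq_of_constr hF hcon

theorem extCF_primeCF [Finite E] (hF : IsExtFun Θ F) (hC : Consistent Θ F) {k : PF E I}
    (hk : k ∈ Ext Θ) : extCF Θ (primeCF Θ F) k = F k := by
  funext ω
  by_cases hω : ω ∈ dom k
  · obtain ⟨h, hh, hle, ht⟩ := exists_tip_le_of_mem_ext hk hω
    rw [extCF_apply_of_tip (primeCF_mem_causFunSet hF hC).1 hh hle ht,
      primeCF_apply_of_tip hh ht]
    exact hC k hk h (mem_ext_of_mem hh) hle ω (hF.mem_dom (mem_ext_of_mem hh) ht.1)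
  · have hω' : ω ∉ dom (F k) := hF k hk ▸ hω
    rw [extCF_apply_of_not_mem_dom hω, eq_comm]
    simpa [dom] using hω'

theorem primeCF_extCF (hf : f ∈ CausFunSet Θ O) : primeCF Θ (extCF Θ f) = f := by
  funext h ω
  by_cases hω : h ∈ Θ ∧ ω ∈ tips Θ h
  · rw [primeCF_apply_of_tip hω.1 hω.2, extCF_apply_of_tip hf.1 hω.1 (le.refl_s2 h) hω.2]
  · rw [apply_eq_none_of_not_tip hf hω]
    exact if_neg hω

end CausFun

theorem stmt2_general {E : Type} [Fintype E] {I O : E → Type}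
    (Θ : Set (PF E I))
    (F : PF E I → PF E O) (hF : IsExtFun Θ F) :
    ((∃ f ∈ CausFunSet Θ O, ∀ k ∈ Ext Θ, extCF Θ f k = F k) ↔ Consistent Θ F) ∧
    (Consistent Θ F →
      primeCF Θ F ∈ CausFunSet Θ O ∧
      (∀ k ∈ Ext Θ, extCF Θ (primeCF Θ F) k = F k) ∧
      (∀ f ∈ CausFunSet Θ O, (∀ k ∈ Ext Θ, extCF Θ f k = F k) → f = primeCF Θ F)) ∧
    (∀ f ∈ CausFunSet Θ O, primeCF Θ (extCF Θ f) = f) := by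
  have ext_prime (hC : Consistent Θ F) : ∀ k ∈ Ext Θ, extCF Θ (primeCF Θ F) k = F k :=
    fun _ hk => extCF_primeCF hF hC hk
  have unique (f) (hf : f ∈ CausFunSet Θ O) (hfF : ∀ k ∈ Ext Θ, extCF Θ f k = F k) :
      f = primeCF Θ F :=
    (primeCF_extCF hf).symm.trans (primeCF_congr fun h hh => hfF h (mem_ext_of_mem hh))
  refine ⟨⟨?_, fun hC => ⟨_, primeCF_mem_causFunSet hF hC, ext_prime hC⟩⟩,
    fun hC => ⟨primeCF_mem_causFunSet hF hC, ext_prime hC, unique⟩, fun _ => primeCF_extCF⟩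
  rintro ⟨f, hf, hfF⟩
  exact (consistent_extCF hf.1).congr hfF

/-- an extended function is of the form `Ext f` for a (necessarily
unique) causal function `f` iff it satisfies the consistency condition; the unique such
`f` is `Prime F̂`, with `Ext (Prime F̂) = F̂` and `Prime (Ext f) = f`. -/
theorem stmt2 {E : Type} [Fintype E] {I O : E → Type}
    [∀ ω, Nonempty (I ω)] [∀ ω, Nonempty (O ω)]
    (Θ : Set (PF E I)) (hS : IsSpace Θ)
    (F : PF E I → PF E O) (hF : IsExtFun Θ F) :
    ((∃ f ∈ CausFunSet Θ O, ∀ k ∈ Ext Θ, extCF Θ f k = F k) ↔ Consistent Θ F) ∧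
    (Consistent Θ F →
      primeCF Θ F ∈ CausFunSet Θ O ∧
      (∀ k ∈ Ext Θ, extCF Θ (primeCF Θ F) k = F k) ∧
      (∀ f ∈ CausFunSet Θ O, (∀ k ∈ Ext Θ, extCF Θ f k = F k) → f = primeCF Θ F)) ∧
    (∀ f ∈ CausFunSet Θ O, primeCF Θ (extCF Θ f) = f) :=
  stmt2_general Θ F hF

end Caus
end

section
/- Let Θ be a space of input histories over (E, I) with outputs O, and Θ' a space of input histories over (E', I') with outputs O', where E ∩ E' = ∅. Then the map sending a pair (f, f') ∈ CausFun(Θ,O) × CausFun(Θ',O') to the function on Θ ∪ Θ' defined by h ↦ f(h) for h ∈ Θ and h ↦ f'(h) for h ∈ Θ' is a well-defined bijection onto CausFun(Θ ∪ Θ', O ⊔ O'); in particular CausFun(Θ ∪ Θ', O ⊔ O') ≅ CausFun(Θ,O) × CausFun(Θ',O'). -/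
namespace Caus

variable {E : Type} {I O : E → Type}

open Classical in
/-- Gluing of a pair of causal functions over a parallel composition. -/
noncomputable def parGlue (Θ : Set (PF E I))
    (p : (PF E I → PF E O) × (PF E I → PF E O)) : PF E I → PF E O :=
  fun h => if h ∈ Θ then p.1 h else p.2 h

/-! The two components act on disjoint sets of events, so a history of one is never below a
history of the other: tips in `Θ ∪ Θ'` are tips in the component. The only real point is that
constrainedness does not change either. A consistent binary extended function `F̂` for `Θ` lifts
to one for `Θ ∪ Θ'` by evaluating `F̂` on the `Θ`-part of an extended history and a constant on
the remaining events, so constraints at an event of `Θ` are the same in `Θ` and in `Θ ∪ Θ'`.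
Hence a function is causal for `Θ ∪ Θ'` iff it is causal for both components, and restricting
to `Θ` and to `Θ'` inverts `parGlue Θ`. -/

theorem ext_mono {Θ Θ₂ : Set (PF E I)} (hs : Θ ⊆ Θ₂) : Ext Θ ⊆ Ext Θ₂ :=
  fun _ ⟨S, hS, hne, hpair, hjoin⟩ => ⟨S, hS.trans hs, hne, hpair, hjoin⟩

theorem IsExtFun.mono {Θ Θ₂ : Set (PF E I)} {F : PF E I → PF E O} (hs : Θ ⊆ Θ₂)
    (hF : IsExtFun Θ₂ F) : IsExtFun Θ F :=
  fun k hk => hF k (ext_mono hs hk)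

theorem Consistent.mono {Θ Θ₂ : Set (PF E I)} {F : PF E I → PF E O} (hs : Θ ⊆ Θ₂)
    (hF : Consistent Θ₂ F) : Consistent Θ F :=
  fun k hk k' hk' => hF k (ext_mono hs hk) k' (ext_mono hs hk')

theorem IsCausFun.apply_eq_none {Θ : Set (PF E I)} {f : PF E I → PF E O} (hf : IsCausFun Θ f)
    {h : PF E I} (hh : h ∈ Θ) {ω : E} (hω : ω ∉ dom h) : f h ω = none :=
  Option.not_isSome_iff_eq_none.mp fun hs => hω ((hf.1 h hh).subset hs).1

theorem IsCausFun.congr {Θ : Set (PF E I)} {f g : PF E I → PF E O} (hf : IsCausFun Θ f)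
    (hfg : Set.EqOn f g Θ) : IsCausFun Θ g := by
  refine ⟨fun h hh => hfg hh ▸ hf.1 h hh, fun ω h h' hc => ?_⟩
  rw [← hfg hc.1, ← hfg hc.2.1]
  exact hf.2 ω h h' hc

theorem restrictCF_eqOn (lam : Set (PF E I)) (f : PF E I → PF E O) :
    Set.EqOn (restrictCF lam f) f lam :=
  fun _ hh => if_pos hh

theorem restrictCF_congr {lam : Set (PF E I)} {f g : PF E I → PF E O} (hfg : Set.EqOn f g lam) :
    restrictCF lam f = restrictCF lam g := by
  funext h
  by_cases hh : h ∈ lam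
  · simp only [restrictCF, if_pos hh, hfg hh]
  · simp only [restrictCF, if_neg hh]

theorem restrictCF_mem_causFunSet {Θ : Set (PF E I)} {f : PF E I → PF E O}
    (hf : IsCausFun Θ f) : restrictCF Θ f ∈ CausFunSet Θ O :=
  ⟨hf.congr (restrictCF_eqOn Θ f).symm, fun h hh _ => by simp only [restrictCF, if_neg hh]⟩

theorem restrictCF_eq_self {Θ : Set (PF E I)} {f : PF E I → PF E O} (hf : f ∈ CausFunSet Θ O) :
    restrictCF Θ f = f := by
  funext h
  by_cases hh : h ∈ Θ
  · simp only [restrictCF, if_pos hh]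
  · simp only [restrictCF, if_neg hh]
    exact funext fun ω => (hf.2 h hh ω).symm

def events (Θ : Set (PF E I)) : Set E := ⋃ h ∈ Θ, dom h

theorem dom_subset_events {Θ : Set (PF E I)} {h : PF E I} (hh : h ∈ Θ) : dom h ⊆ events Θ :=
  Set.subset_biUnion_of_mem hh

open Classical in
noncomputable def restrictPF (A : Set E) (k : PF E I) : PF E I :=
  fun ω => if ω ∈ A then k ω else none

theorem restrictPF_eq_self {A : Set E} {k : PF E I} (hk : dom k ⊆ A) : restrictPF A k = k := by
  funext ω
  by_cases hω : ω ∈ A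
  · simp only [restrictPF, if_pos hω]
  · simp only [restrictPF, if_neg hω]
    exact (Option.not_isSome_iff_eq_none.mp fun hs => hω (hk hs)).symm

theorem restrictPF_le_restrictPF {A : Set E} {k k' : PF E I} (hle : le k' k) :
    le (restrictPF A k') (restrictPF A k) := by
  intro ω hs
  by_cases hω : ω ∈ A
  · simp only [restrictPF, if_pos hω] at hs ⊢
    exact hle ω hs
  · simp [restrictPF, if_neg hω] at hs

open Classical in
noncomputable def liftExtFun (A : Set E) (c : ∀ ω, O ω) (F : PF E I → PF E O) :
    PF E I → PF E O :=
  fun k ω => if (k ω).isSome then (if ω ∈ A then F (restrictPF A k) ω else some (c ω)) else none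

theorem liftExtFun_of_mem {A : Set E} {c : ∀ ω, O ω} {F : PF E I → PF E O} {k : PF E I} {ω : E}
    (hk : (k ω).isSome) (hω : ω ∈ A) : liftExtFun A c F k ω = F (restrictPF A k) ω := by
  simp only [liftExtFun, if_pos hk, if_pos hω]

theorem isSome_of_isSome_liftExtFun {A : Set E} {c : ∀ ω, O ω} {F : PF E I → PF E O}
    {k : PF E I} {ω : E} (hs : (liftExtFun A c F k ω).isSome) : (k ω).isSome := by
  by_contra hk
  simp [liftExtFun, hk] at hs

section Parallel

variable {Θ Θ' : Set (PF E I)}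

theorem not_mem_dom_of_mem_events (hdisj : Disjoint (events Θ) (events Θ')) {h : PF E I}
    (hh : h ∈ Θ') {ω : E} (hω : ω ∈ events Θ) : ω ∉ dom h :=
  fun hd => Set.disjoint_left.mp hdisj hω (dom_subset_events hh hd)

theorem tips_union_of_mem_left (hdisj : Disjoint (events Θ) (events Θ')) {h : PF E I}
    (hh : h ∈ Θ) : tips (Θ ∪ Θ') h = tips Θ h := by
  ext ω
  refine ⟨fun ⟨hd, hmin⟩ => ⟨hd, fun h' hh' => hmin h' (Or.inl hh')⟩,
    fun ⟨hd, hmin⟩ => ⟨hd, ?_⟩⟩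
  rintro h' (hh' | hh') hle hne
  · exact hmin h' hh' hle hne
  · exact not_mem_dom_of_mem_events hdisj hh' (dom_subset_events hh hd)

theorem restrictPF_events_mem_ext (hdisj : Disjoint (events Θ) (events Θ')) {k : PF E I}
    (hk : k ∈ Ext (Θ ∪ Θ')) {ω₀ : E} (hω₀ : ω₀ ∈ events Θ) (hs : (k ω₀).isSome) :
    restrictPF (events Θ) k ∈ Ext Θ := by
  obtain ⟨S, hSsub, -, hpair, hjoin⟩ := hk
  have hmem : ∀ h ∈ S, ∀ ω ∈ events Θ, ω ∈ dom h → h ∈ Θ := fun h hhS _ hω hd =>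
    (hSsub hhS).resolve_right fun hh' => not_mem_dom_of_mem_events hdisj hh' hω hd
  obtain ⟨x₀, hx₀⟩ := Option.isSome_iff_exists.mp hs
  obtain ⟨h₀, hh₀S, hh₀⟩ := (hjoin ω₀ x₀).mp hx₀
  refine ⟨S ∩ Θ, Set.inter_subset_right,
    ⟨h₀, hh₀S, hmem h₀ hh₀S ω₀ hω₀ (by simp [dom, hh₀])⟩,
    hpair.mono Set.inter_subset_left, fun ω x => ?_⟩
  by_cases hω : ω ∈ events Θ
  · simp only [restrictPF, if_pos hω, hjoin ω x]
    exact ⟨fun ⟨h, hhS, hh⟩ => ⟨h, ⟨hhS, hmem h hhS ω hω (by simp [dom, hh])⟩, hh⟩,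
      fun ⟨h, ⟨hhS, _⟩, hh⟩ => ⟨h, hhS, hh⟩⟩
  · simp only [restrictPF, if_neg hω, reduceCtorEq, false_iff]
    exact fun ⟨h, ⟨_, hhΘ⟩, hh⟩ => hω (dom_subset_events hhΘ (by simp [dom, hh]))

theorem isExtFun_liftExtFun (hdisj : Disjoint (events Θ) (events Θ')) (c : ∀ ω, O ω)
    {F : PF E I → PF E O} (hF : IsExtFun Θ F) :
    IsExtFun (Θ ∪ Θ') (liftExtFun (events Θ) c F) := by
  intro k hk
  ext ω
  refine ⟨isSome_of_isSome_liftExtFun, fun (hs : (k ω).isSome) => ?_⟩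
  by_cases hω : ω ∈ events Θ
  · change (liftExtFun (events Θ) c F k ω).isSome
    rw [liftExtFun_of_mem hs hω]
    change ω ∈ dom (F _)
    rw [hF _ (restrictPF_events_mem_ext hdisj hk hω hs)]
    simpa [dom, restrictPF, hω] using hs
  · simp [dom, liftExtFun, hs, hω]

theorem consistent_liftExtFun (hdisj : Disjoint (events Θ) (events Θ')) (c : ∀ ω, O ω)
    {F : PF E I → PF E O} (hF : Consistent Θ F) :
    Consistent (Θ ∪ Θ') (liftExtFun (events Θ) c F) := by
  intro k hk k' hk' hle ω hs
  have hs' : (k' ω).isSome := isSome_of_isSome_liftExtFun hs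
  have hkω : k' ω = k ω := hle ω hs'
  have hsk : (k ω).isSome := hkω ▸ hs'
  by_cases hω : ω ∈ events Θ
  · rw [liftExtFun_of_mem hs' hω] at hs ⊢
    rw [liftExtFun_of_mem hsk hω]
    exact hF _ (restrictPF_events_mem_ext hdisj hk hω hsk) _
      (restrictPF_events_mem_ext hdisj hk' hω hs') (restrictPF_le_restrictPF hle) ω hs
  · simp only [liftExtFun, if_pos hs', if_pos hsk, if_neg hω]

theorem constr_union_iff (hdisj : Disjoint (events Θ) (events Θ')) {ω : E} {h h' : PF E I}
    (hh : h ∈ Θ) (hh' : h' ∈ Θ) : Constr (Θ ∪ Θ') ω h h' ↔ Constr Θ ω h h' := by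
  rw [Constr, Constr, tips_union_of_mem_left hdisj hh, tips_union_of_mem_left hdisj hh']
  refine ⟨fun ⟨_, _, htip, htip', hc⟩ => ⟨hh, hh', htip, htip', fun F hF hF' => ?_⟩,
    fun ⟨_, _, htip, htip', hc⟩ => ⟨Or.inl hh, Or.inl hh', htip, htip', fun F hF hF' =>
      hc F (hF.mono Set.subset_union_left) (hF'.mono Set.subset_union_left)⟩⟩
  have hG := hc _ (isExtFun_liftExtFun hdisj (fun _ => true) hF)
    (consistent_liftExtFun hdisj (fun _ => true) hF')
  have hω : ω ∈ events Θ := dom_subset_events hh htip.1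
  rwa [liftExtFun_of_mem htip.1 hω, liftExtFun_of_mem htip'.1 hω,
    restrictPF_eq_self (dom_subset_events hh), restrictPF_eq_self (dom_subset_events hh')] at hG

theorem Constr.mem_left_of_union (hdisj : Disjoint (events Θ) (events Θ')) {ω : E}
    {h h' : PF E I} (hc : Constr (Θ ∪ Θ') ω h h') (hh : h ∈ Θ) : h' ∈ Θ :=
  hc.2.1.resolve_right fun hh' =>
    not_mem_dom_of_mem_events hdisj hh' (dom_subset_events hh hc.2.2.1.1) hc.2.2.2.1.1

theorem isCausFun_union_left (hdisj : Disjoint (events Θ) (events Θ')) {f : PF E I → PF E O}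
    (hf : IsCausFun (Θ ∪ Θ') f) : IsCausFun Θ f :=
  ⟨fun h hh => tips_union_of_mem_left hdisj hh ▸ hf.1 h (Or.inl hh),
    fun ω h h' hc => hf.2 ω h h' ((constr_union_iff hdisj hc.1 hc.2.1).mpr hc)⟩

theorem isCausFun_union_iff (hdisj : Disjoint (events Θ) (events Θ')) {f : PF E I → PF E O} :
    IsCausFun (Θ ∪ Θ') f ↔ IsCausFun Θ f ∧ IsCausFun Θ' f := by
  have hdisj' := hdisj.symm
  refine ⟨fun hf => ⟨isCausFun_union_left hdisj hf,
    isCausFun_union_left hdisj' (Set.union_comm Θ Θ' ▸ hf)⟩, fun ⟨hf, hf'⟩ => ⟨?_, ?_⟩⟩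
  · rintro h (hh | hh)
    · rw [tips_union_of_mem_left hdisj hh, hf.1 h hh]
    · rw [Set.union_comm, tips_union_of_mem_left hdisj' hh, hf'.1 h hh]
  · intro ω h h' hc
    rcases hc.1 with hh | hh
    · exact hf.2 ω h h' ((constr_union_iff hdisj hh (hc.mem_left_of_union hdisj hh)).mp hc)
    · rw [Set.union_comm] at hc
      exact hf'.2 ω h h' ((constr_union_iff hdisj' hh (hc.mem_left_of_union hdisj' hh)).mp hc)

-- A common history of `Θ` and `Θ'` has empty domain, so both causal functions vanish on it.
theorem parGlue_eqOn_right (hdisj : Disjoint (events Θ) (events Θ'))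
    {p : (PF E I → PF E O) × (PF E I → PF E O)} (hf : IsCausFun Θ p.1) (hf' : IsCausFun Θ' p.2) :
    Set.EqOn (parGlue Θ p) p.2 Θ' := by
  intro h hh'
  by_cases hh : h ∈ Θ
  · have hnd : ∀ ω, ω ∉ dom h := fun ω hd =>
      not_mem_dom_of_mem_events hdisj hh' (dom_subset_events hh hd) hd
    funext ω
    simp only [parGlue, if_pos hh, hf.apply_eq_none hh (hnd ω), hf'.apply_eq_none hh' (hnd ω)]
  · simp only [parGlue, if_neg hh]

theorem parGlue_mapsTo (hdisj : Disjoint (events Θ) (events Θ')) :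
    Set.MapsTo (parGlue Θ) (CausFunSet Θ O ×ˢ CausFunSet Θ' O) (CausFunSet (Θ ∪ Θ') O) := by
  rintro p ⟨hf, hf'⟩
  refine ⟨(isCausFun_union_iff hdisj).mpr ⟨hf.1.congr fun h hh => (if_pos hh).symm,
    hf'.1.congr (parGlue_eqOn_right hdisj hf.1 hf'.1).symm⟩, fun h hh ω => ?_⟩
  have hnot : h ∉ Θ := fun h' => hh (Or.inl h')
  simp only [parGlue, if_neg hnot]
  exact hf'.2 h (fun h' => hh (Or.inr h')) ω

theorem parGlue_invOn (hdisj : Disjoint (events Θ) (events Θ')) :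
    Set.InvOn (fun g : PF E I → PF E O => (restrictCF Θ g, restrictCF Θ' g)) (parGlue Θ)
      (CausFunSet Θ O ×ˢ CausFunSet Θ' O) (CausFunSet (Θ ∪ Θ') O) := by
  refine ⟨fun p ⟨hf, hf'⟩ => Prod.ext ?_ ?_, fun g hg => funext fun h => ?_⟩
  · exact (restrictCF_congr fun h hh => if_pos hh).trans (restrictCF_eq_self hf)
  · exact (restrictCF_congr (parGlue_eqOn_right hdisj hf.1 hf'.1)).trans (restrictCF_eq_self hf')
  · by_cases hh : h ∈ Θ
    · simp only [parGlue, restrictCF, if_pos hh]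
    by_cases hh' : h ∈ Θ'
    · simp only [parGlue, restrictCF, if_neg hh, if_pos hh']
    · simp only [parGlue, restrictCF, if_neg hh, if_neg hh']
      exact funext fun ω => (hg.2 h (fun h'' => h''.elim hh hh') ω).symm

end Parallel

theorem stmt9_general {E : Type} {I O : E → Type}
    (E₁ E₂ : Set E) (hdisj : Disjoint E₁ E₂)
    (Θ Θ' : Set (PF E I))
    (hd1 : ∀ h ∈ Θ, dom h ⊆ E₁) (hd2 : ∀ h ∈ Θ', dom h ⊆ E₂) :
    Set.BijOn (parGlue Θ)
      ((CausFunSet Θ O) ×ˢ (CausFunSet Θ' O))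
      (CausFunSet (Θ ∪ Θ') O) := by
  have hev : Disjoint (events Θ) (events Θ') :=
    hdisj.mono (Set.iUnion₂_subset hd1) (Set.iUnion₂_subset hd2)
  exact (parGlue_invOn hev).bijOn (parGlue_mapsTo hev)
    fun g hg => ⟨restrictCF_mem_causFunSet ((isCausFun_union_iff hev).mp hg.1).1,
      restrictCF_mem_causFunSet ((isCausFun_union_iff hev).mp hg.1).2⟩

/-- for spaces `Θ`, `Θ'` over disjoint sets of events, pairing a
causal function for `Θ` with one for `Θ'` gives a bijection onto the causal functions
of the parallel composition `Θ ∪ Θ'`. -/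
theorem stmt9 {E : Type} [Fintype E] {I O : E → Type}
    [∀ ω, Nonempty (I ω)] [∀ ω, Nonempty (O ω)]
    (E₁ E₂ : Set E) (hdisj : Disjoint E₁ E₂)
    (Θ Θ' : Set (PF E I)) (hS : IsSpace Θ) (hS' : IsSpace Θ')
    (hd1 : ∀ h ∈ Θ, dom h ⊆ E₁) (hd2 : ∀ h ∈ Θ', dom h ⊆ E₂) :
    Set.BijOn (parGlue Θ)
      ((CausFunSet Θ O) ×ˢ (CausFunSet Θ' O))
      (CausFunSet (Θ ∪ Θ') O) :=
  stmt9_general E₁ E₂ hdisj Θ Θ' hd1 hd2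

end Caus
end
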